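/- In the conservative value iteration algorithm with Bernstein penalties, on the good event E (where empirical transition and reward estimates are within their Bernstein confidence intervals), the iterates satisfy V̂_{i-1}(s) ≤ V̂_i(s) ≤ V^{π̂*}(s) ≤ V*(s) for every iteration i and every state s, where π̂* is the greedy policy with respect to Q̂. -/

import Mathlib

/-!
On the good event the penalty absorbs the estimation error, so each pessimistic backup is
dominated by the true one: `Q̂_{i+1}(s,a) ≤ r(s,a) + γ P(s,a)·V̂_i`. The value `V^π̂` of the greedy
policy is a nonnegative fixed point of the monotone Bellman operator of `π̂`, and greediness lets
`max_a Q̂` be replaced by `Q̂(·, π̂ ·)`; induction on `i` then gives `V̂_i ≤ V^π̂`. Monotonicity of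
the iterates is built into the `max` of the update, and `V^π̂ ≤ V*` because values of
deterministic policies are bounded by `1 / (1 - γ)`, so the supremum defining `V*` is a genuine one.
-/

open Finset

section

variable {S A : Type*} [Fintype S] [Fintype A] [Nonempty A] [DecidableEq S]

/-- The pessimistic value iterates of conservative value iteration with penalties `b`:
`V̂₀ = 0` and `V̂_{i+1}(s) = max (V̂_i(s)) (max_a Q̂_{i+1}(s,a))` with
`Q̂_{i+1}(s,a) = r̂(s,a) - b_{i+1}(s,a) + γ P̂(s,a)·V̂_i`. -/
noncomputable def Vhat (rhat : S → A → ℝ) (Phat : S → A → S → ℝ)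
    (b : ℕ → S → A → ℝ) (γ : ℝ) : ℕ → S → ℝ
  | 0 => fun _ => 0
  | (i + 1) => fun s => max (Vhat rhat Phat b γ i s)
      (⨆ a : A, (rhat s a - b (i + 1) s a +
        γ * ∑ s', Phat s a s' * Vhat rhat Phat b γ i s'))

/-- `Q̂_{i+1}(s,a) = r̂(s,a) - b_{i+1}(s,a) + γ P̂(s,a)·V̂_i`. -/
noncomputable def Qhat (rhat : S → A → ℝ) (Phat : S → A → S → ℝ)
    (b : ℕ → S → A → ℝ) (γ : ℝ) (i : ℕ) (s : S) (a : A) : ℝ :=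
  rhat s a - b (i + 1) s a + γ * ∑ s', Phat s a s' * Vhat rhat Phat b γ i s'

/-- State distribution at time `t` of the true MDP started at `s0`, following the
deterministic policy `π`. -/
noncomputable def stateDistFrom (P : S → A → S → ℝ) (π : S → A) (s0 : S) : ℕ → S → ℝ
  | 0 => fun s => if s = s0 then 1 else 0
  | (t + 1) => fun s' => ∑ s, stateDistFrom P π s0 t s * P s (π s) s'

/-- The true value `V^π(s0)` of a deterministic policy `π`. -/
noncomputable def Vdet (P : S → A → S → ℝ) (r : S → A → ℝ) (γ : ℝ)
    (π : S → A) (s0 : S) : ℝ :=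
  ∑' t : ℕ, γ ^ t * ∑ s, stateDistFrom P π s0 t s * r s (π s)

/-- The optimal value `V*(s0) = sup_π V^π(s0)`. -/
noncomputable def VstarDet (P : S → A → S → ℝ) (r : S → A → ℝ) (γ : ℝ) (s0 : S) : ℝ :=
  ⨆ π : S → A, Vdet P r γ π s0

end

section MarkovChain

variable {S A : Type*} [Fintype S] [DecidableEq S] {P : S → A → S → ℝ} (π : S → A)

theorem stateDistFrom_nonneg (hP0 : ∀ s a s', 0 ≤ P s a s') (s0 : S) (t : ℕ) (s : S) :
    0 ≤ stateDistFrom P π s0 t s := by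
  induction t generalizing s with
  | zero => simp only [stateDistFrom]; positivity
  | succ t ih => exact sum_nonneg fun s1 _ => mul_nonneg (ih s1) (hP0 _ _ _)

theorem sum_stateDistFrom (hP1 : ∀ s a, ∑ s', P s a s' = 1) (s0 : S) (t : ℕ) :
    ∑ s, stateDistFrom P π s0 t s = 1 := by
  induction t with
  | zero => simp [stateDistFrom]
  | succ t ih =>
    simp only [stateDistFrom]
    rw [sum_comm]
    simp only [← mul_sum, hP1, mul_one, ih]

-- Decomposition by the first step; the definition decomposes by the last one.
theorem stateDistFrom_succ' (s0 : S) (t : ℕ) (s : S) :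
    stateDistFrom P π s0 (t + 1) s = ∑ s1, P s0 (π s0) s1 * stateDistFrom P π s1 t s := by
  induction t generalizing s with
  | zero => simp [stateDistFrom]
  | succ t ih =>
    show ∑ s', stateDistFrom P π s0 (t + 1) s' * P s' (π s') s
      = ∑ s1, P s0 (π s0) s1 * ∑ s', stateDistFrom P π s1 t s' * P s' (π s') s
    simp_rw [ih, sum_mul, mul_sum, mul_assoc]
    exact sum_comm

end MarkovChain

section PolicyValue

variable {S A : Type*} [Fintype S] [DecidableEq S]

noncomputable def expectedRewardAt (P : S → A → S → ℝ) (r : S → A → ℝ) (π : S → A) (s0 : S)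
    (t : ℕ) : ℝ :=
  ∑ s, stateDistFrom P π s0 t s * r s (π s)

variable {P : S → A → S → ℝ} {r : S → A → ℝ} {γ : ℝ} (π : S → A)

theorem expectedRewardAt_zero (s0 : S) : expectedRewardAt P r π s0 0 = r s0 (π s0) := by
  simp [expectedRewardAt, stateDistFrom]

theorem expectedRewardAt_succ (s0 : S) (t : ℕ) :
    expectedRewardAt P r π s0 (t + 1) = ∑ s1, P s0 (π s0) s1 * expectedRewardAt P r π s1 t := by
  simp_rw [expectedRewardAt, stateDistFrom_succ', sum_mul, mul_sum]
  rw [sum_comm]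
  simp only [mul_assoc]

theorem expectedRewardAt_nonneg (hP0 : ∀ s a s', 0 ≤ P s a s') (hr0 : ∀ s a, 0 ≤ r s a)
    (s0 : S) (t : ℕ) : 0 ≤ expectedRewardAt P r π s0 t :=
  sum_nonneg fun s _ => mul_nonneg (stateDistFrom_nonneg π hP0 s0 t s) (hr0 _ _)

theorem abs_expectedRewardAt_le {C : ℝ} (hP0 : ∀ s a s', 0 ≤ P s a s')
    (hP1 : ∀ s a, ∑ s', P s a s' = 1) (hr : ∀ s a, |r s a| ≤ C) (s0 : S) (t : ℕ) :
    |expectedRewardAt P r π s0 t| ≤ C :=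
  calc |expectedRewardAt P r π s0 t|
      ≤ ∑ s, stateDistFrom P π s0 t s * |r s (π s)| := by
        refine (abs_sum_le_sum_abs _ _).trans_eq (sum_congr rfl fun s _ => ?_)
        rw [abs_mul, abs_of_nonneg (stateDistFrom_nonneg π hP0 s0 t s)]
    _ ≤ ∑ s, stateDistFrom P π s0 t s * C :=
        sum_le_sum fun s _ => mul_le_mul_of_nonneg_left (hr _ _) (stateDistFrom_nonneg π hP0 s0 t s)
    _ = C := by rw [← sum_mul, sum_stateDistFrom π hP1, one_mul]

theorem Vdet_eq_tsum (s0 : S) :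
    Vdet P r γ π s0 = ∑' t, γ ^ t * expectedRewardAt P r π s0 t := rfl

theorem summable_discounted_expectedRewardAt {C : ℝ} (hγ0 : 0 ≤ γ) (hγ1 : γ < 1)
    (hP0 : ∀ s a s', 0 ≤ P s a s') (hP1 : ∀ s a, ∑ s', P s a s' = 1) (hr : ∀ s a, |r s a| ≤ C)
    (s0 : S) : Summable fun t => γ ^ t * expectedRewardAt P r π s0 t := by
  refine Summable.of_norm_bounded ((summable_geometric_of_lt_one hγ0 hγ1).mul_left C) fun t => ?_
  rw [Real.norm_eq_abs, abs_mul, abs_of_nonneg (pow_nonneg hγ0 t), mul_comm]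
  exact mul_le_mul_of_nonneg_right (abs_expectedRewardAt_le π hP0 hP1 hr s0 t) (pow_nonneg hγ0 t)

theorem Vdet_nonneg (hγ0 : 0 ≤ γ) (hP0 : ∀ s a s', 0 ≤ P s a s') (hr0 : ∀ s a, 0 ≤ r s a)
    (s0 : S) : 0 ≤ Vdet P r γ π s0 :=
  tsum_nonneg fun t => mul_nonneg (pow_nonneg hγ0 t) (expectedRewardAt_nonneg π hP0 hr0 s0 t)

theorem Vdet_le {C : ℝ} (hγ0 : 0 ≤ γ) (hγ1 : γ < 1) (hP0 : ∀ s a s', 0 ≤ P s a s')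
    (hP1 : ∀ s a, ∑ s', P s a s' = 1) (hr : ∀ s a, |r s a| ≤ C) (s0 : S) :
    Vdet P r γ π s0 ≤ C * (1 - γ)⁻¹ := by
  rw [Vdet_eq_tsum, ← tsum_geometric_of_lt_one hγ0 hγ1, ← tsum_mul_left]
  refine (summable_discounted_expectedRewardAt π hγ0 hγ1 hP0 hP1 hr s0).tsum_le_tsum (fun t => ?_)
    ((summable_geometric_of_lt_one hγ0 hγ1).mul_left C)
  rw [mul_comm C]
  exact mul_le_mul_of_nonneg_left (abs_le.1 (abs_expectedRewardAt_le π hP0 hP1 hr s0 t)).2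
    (pow_nonneg hγ0 t)

theorem Vdet_le_VstarDet {C : ℝ} (hγ0 : 0 ≤ γ) (hγ1 : γ < 1) (hP0 : ∀ s a s', 0 ≤ P s a s')
    (hP1 : ∀ s a, ∑ s', P s a s' = 1) (hr : ∀ s a, |r s a| ≤ C) (s0 : S) :
    Vdet P r γ π s0 ≤ VstarDet P r γ s0 :=
  le_ciSup ⟨C * (1 - γ)⁻¹, by rintro _ ⟨π', rfl⟩; exact Vdet_le π' hγ0 hγ1 hP0 hP1 hr s0⟩ π

theorem Vdet_bellman {C : ℝ} (hγ0 : 0 ≤ γ) (hγ1 : γ < 1) (hP0 : ∀ s a s', 0 ≤ P s a s')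
    (hP1 : ∀ s a, ∑ s', P s a s' = 1) (hr : ∀ s a, |r s a| ≤ C) (s0 : S) :
    Vdet P r γ π s0 = r s0 (π s0) + γ * ∑ s1, P s0 (π s0) s1 * Vdet P r γ π s1 := by
  have hsum := summable_discounted_expectedRewardAt π hγ0 hγ1 hP0 hP1 hr
  have hshift : ∀ t, γ ^ (t + 1) * expectedRewardAt P r π s0 (t + 1)
      = ∑ s1, P s0 (π s0) s1 * (γ * (γ ^ t * expectedRewardAt P r π s1 t)) := fun t => by
    rw [expectedRewardAt_succ, mul_sum]
    exact sum_congr rfl fun s1 _ => by ring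
  rw [Vdet_eq_tsum, (hsum s0).tsum_eq_zero_add, expectedRewardAt_zero, pow_zero, one_mul]
  simp_rw [hshift]
  rw [Summable.tsum_finsetSum fun s1 _ => ((hsum s1).mul_left γ).mul_left _, mul_sum]
  simp_rw [tsum_mul_left, Vdet_eq_tsum]
  exact congrArg _ (sum_congr rfl fun s1 _ => by ring)

end PolicyValue

section Pessimism

variable {S A : Type*} [Fintype S] {rhat : S → A → ℝ} {Phat : S → A → S → ℝ}
  {b : ℕ → S → A → ℝ} {γ : ℝ}

theorem Vhat_succ (i : ℕ) (s : S) :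
    Vhat rhat Phat b γ (i + 1) s
      = max (Vhat rhat Phat b γ i s) (⨆ a, Qhat rhat Phat b γ i s a) := rfl

theorem Vhat_le_Vhat_succ (i : ℕ) (s : S) :
    Vhat rhat Phat b γ i s ≤ Vhat rhat Phat b γ (i + 1) s :=
  le_max_left _ _

theorem Qhat_le_of_penalty_ge {P : S → A → S → ℝ} {r : S → A → ℝ} {i : ℕ} {s : S} {a : A}
    (hE : (rhat s a - r s a) +
      γ * ∑ s', (Phat s a s' - P s a s') * Vhat rhat Phat b γ i s' ≤ b (i + 1) s a) :
    Qhat rhat Phat b γ i s a ≤ r s a + γ * ∑ s', P s a s' * Vhat rhat Phat b γ i s' := by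
  simp only [sub_mul, sum_sub_distrib, mul_sub] at hE
  rw [Qhat]
  linarith

theorem Vhat_le_of_bellman [Nonempty A] {P : S → A → S → ℝ} {r : S → A → ℝ} {π : S → A}
    {V : S → ℝ} (hγ0 : 0 ≤ γ) (hP0 : ∀ s a s', 0 ≤ P s a s')
    (hE : ∀ i s a, (rhat s a - r s a) +
      γ * ∑ s', (Phat s a s' - P s a s') * Vhat rhat Phat b γ i s' ≤ b (i + 1) s a)
    (hgreedy : ∀ i s a, Qhat rhat Phat b γ i s a ≤ Qhat rhat Phat b γ i s (π s))
    (hV0 : ∀ s, 0 ≤ V s) (hV : ∀ s, V s = r s (π s) + γ * ∑ s', P s (π s) s' * V s')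
    (i : ℕ) (s : S) : Vhat rhat Phat b γ i s ≤ V s := by
  induction i generalizing s with
  | zero => exact hV0 s
  | succ i ih =>
    rw [Vhat_succ]
    refine max_le (ih s) (ciSup_le fun a => ?_)
    calc Qhat rhat Phat b γ i s a
        ≤ Qhat rhat Phat b γ i s (π s) := hgreedy i s a
      _ ≤ r s (π s) + γ * ∑ s', P s (π s) s' * Vhat rhat Phat b γ i s' :=
          Qhat_le_of_penalty_ge (hE i s (π s))
      _ ≤ r s (π s) + γ * ∑ s', P s (π s) s' * V s' := by
          gcongr with s' _
          · exact hP0 _ _ _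
          · exact ih s'
      _ = V s := (hV s).symm

end Pessimism

section

variable {S A : Type*} [Fintype S] [Fintype A] [Nonempty A] [DecidableEq S]

theorem stmt_12_general
    (γ : ℝ) (hγ0 : 0 ≤ γ) (hγ1 : γ < 1)
    (P Phat : S → A → S → ℝ)
    (hP0 : ∀ s a s', 0 ≤ P s a s') (hP1 : ∀ s a, ∑ s', P s a s' = 1)
    (r rhat : S → A → ℝ) (hr0 : ∀ s a, 0 ≤ r s a) (hr1 : ∀ s a, r s a ≤ 1)
    (b : ℕ → S → A → ℝ)
    -- good event: the penalties dominate the empirical estimation errors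
    (hE : ∀ i s a, (rhat s a - r s a) +
      γ * ∑ s', (Phat s a s' - P s a s') * Vhat rhat Phat b γ i s' ≤ b (i + 1) s a)
    (πhat : S → A)
    -- π̂* is greedy with respect to Q̂
    (hgreedy : ∀ i s a, Qhat rhat Phat b γ i s a ≤ Qhat rhat Phat b γ i s (πhat s)) :
    ∀ i s, Vhat rhat Phat b γ i s ≤ Vhat rhat Phat b γ (i + 1) s ∧
      Vhat rhat Phat b γ i s ≤ Vdet P r γ πhat s ∧
      Vdet P r γ πhat s ≤ VstarDet P r γ s := by
  have hr : ∀ s a, |r s a| ≤ 1 := fun s a => abs_le.2 ⟨by linarith [hr0 s a], hr1 s a⟩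
  intro i s
  exact ⟨Vhat_le_Vhat_succ i s,
    Vhat_le_of_bellman hγ0 hP0 hE hgreedy (Vdet_nonneg πhat hγ0 hP0 hr0)
      (Vdet_bellman πhat hγ0 hγ1 hP0 hP1 hr) i s,
    Vdet_le_VstarDet πhat hγ0 hγ1 hP0 hP1 hr s⟩

/-- Pessimism guarantee for conservative value iteration with Bernstein-type penalties: on the
good event (where the penalty dominates the empirical estimation errors), for every iteration
`i` and state `s`, `V̂_i(s) ≤ V̂_{i+1}(s)`, `V̂_i(s) ≤ V^{π̂*}(s)` and `V^{π̂*}(s) ≤ V*(s)`,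
where `π̂*` is the greedy policy with respect to `Q̂`. -/
theorem stmt_12
    (γ : ℝ) (hγ0 : 0 ≤ γ) (hγ1 : γ < 1)
    (P Phat : S → A → S → ℝ)
    (hP0 : ∀ s a s', 0 ≤ P s a s') (hP1 : ∀ s a, ∑ s', P s a s' = 1)
    (hPhat0 : ∀ s a s', 0 ≤ Phat s a s') (hPhat1 : ∀ s a, ∑ s', Phat s a s' = 1)
    (r rhat : S → A → ℝ) (hr0 : ∀ s a, 0 ≤ r s a) (hr1 : ∀ s a, r s a ≤ 1)
    (hrhat0 : ∀ s a, 0 ≤ rhat s a)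
    (b : ℕ → S → A → ℝ)
    -- good event: the penalties dominate the empirical estimation errors
    (hE : ∀ i s a, (rhat s a - r s a) +
      γ * ∑ s', (Phat s a s' - P s a s') * Vhat rhat Phat b γ i s' ≤ b (i + 1) s a)
    (πhat : S → A)
    -- π̂* is greedy with respect to Q̂
    (hgreedy : ∀ i s a, Qhat rhat Phat b γ i s a ≤ Qhat rhat Phat b γ i s (πhat s)) :
    ∀ i s, Vhat rhat Phat b γ i s ≤ Vhat rhat Phat b γ (i + 1) s ∧
      Vhat rhat Phat b γ i s ≤ Vdet P r γ πhat s ∧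
      Vdet P r γ πhat s ≤ VstarDet P r γ s :=
  stmt_12_general γ hγ0 hγ1 P Phat hP0 hP1 r rhat hr0 hr1 b hE πhat hgreedy

end
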